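/- Let Ω ⊂ ℝⁿ be a domain, s ∈ (0,1], and let u, v be measurable on Ω with g ∈ D^s_ball(u). Suppose x, y ∈ Ω, N ≥ 2, and φ : ℝⁿ → [0,1] is smooth with φ = 1 on B(x,|x−y|), supp φ ⊂ B(x, N|x−y|), and |∇φ| ≤ 10/(N|x−y|). Assume additionally 0 ≤ u(y) ≤ u(z) ≤ u(x) for a.e. z ∈ Ω. Then the function v(z) := (u(z) − u(y))·φ(z) satisfies: g·φ + 10·(N|x−y|)^{−s}·(u(x)−u(y))·χ_{B(x,N|x−y|)∩Ω} ∈ D^s_ball(v). -/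

import Mathlib

open MeasureTheory Metric Set

/-- `g ∈ D^s_ball(u)` on `Ω`. -/
def MemDBall {n : ℕ} (Ω : Set (EuclideanSpace ℝ (Fin n))) (s : ℝ)
    (u g : EuclideanSpace ℝ (Fin n) → ℝ) : Prop :=
  (∀ x, 0 ≤ g x) ∧ Measurable g ∧
  ∃ E : Set (EuclideanSpace ℝ (Fin n)), volume E = 0 ∧
    ∀ x ∈ Ω \ E, ∀ y ∈ Ω \ E,
      ENNReal.ofReal (2 * dist x y) < EMetric.infEdist x Ωᶜ →
      |u x - u y| ≤ dist x y ^ s * (g x + g y)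

/-- Product rule for Hajłasz ball gradients with a smooth cutoff: if
`g ∈ D^s_ball(u)`, `0 ≤ u(y) ≤ u(z) ≤ u(x)` for a.e. `z ∈ Ω`, and `φ` is a smooth
cutoff equal to `1` on `B(x,|x−y|)`, supported in `B(x,N|x−y|)` with
`|∇φ| ≤ 10/(N|x−y|)`, then
`g·φ + 10 (N|x−y|)^{−s}(u(x)−u(y)) χ_{B(x,N|x−y|)∩Ω} ∈ D^s_ball((u − u(y))φ)`. -/
theorem cutoff_product_rule {n : ℕ} (hn : 1 ≤ n)
    (Ω : Set (EuclideanSpace ℝ (Fin n))) (hΩopen : IsOpen Ω) (hΩconn : IsConnected Ω)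
    (s : ℝ) (hs : 0 < s) (hs1 : s ≤ 1)
    (u g : EuclideanSpace ℝ (Fin n) → ℝ) (hg : MemDBall Ω s u g)
    (x y : EuclideanSpace ℝ (Fin n)) (hx : x ∈ Ω) (hy : y ∈ Ω) (hxy : x ≠ y)
    (N : ℝ) (hN : 2 ≤ N)
    (φ : EuclideanSpace ℝ (Fin n) → ℝ) (hφsmooth : ContDiff ℝ (⊤ : ℕ∞) φ)
    (hφ01 : ∀ z, 0 ≤ φ z ∧ φ z ≤ 1)
    (hφ1 : ∀ z ∈ ball x (dist x y), φ z = 1)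
    (hφ0 : ∀ z ∉ ball x (N * dist x y), φ z = 0)
    (hφgrad : ∀ z, ‖fderiv ℝ φ z‖ ≤ 10 / (N * dist x y))
    (huy : 0 ≤ u y) (huxy : u y ≤ u x)
    (hmono : ∃ E₀ : Set (EuclideanSpace ℝ (Fin n)), volume E₀ = 0 ∧
      ∀ z ∈ Ω \ E₀, u y ≤ u z ∧ u z ≤ u x)
    (v : EuclideanSpace ℝ (Fin n) → ℝ) (hv : ∀ z, v z = (u z - u y) * φ z) :
    MemDBall Ω s v (fun z => g z * φ z +
      10 * (N * dist x y) ^ (-s) * (u x - u y) *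
        Set.indicator (ball x (N * dist x y) ∩ Ω) (fun _ => (1:ℝ)) z) := by
  classical
  obtain ⟨hgpos, hgmeas, E, hE, hEprop⟩ := hg
  obtain ⟨E₀, hE₀, hE₀prop⟩ := hmono
  set D : ℝ := N * dist x y with hD_def
  have hd : 0 < dist x y := dist_pos.2 hxy
  have hD : 0 < D := mul_pos (by linarith) hd
  have hc0 : (0:ℝ) ≤ 10 * D ^ (-s) * (u x - u y) := by
    have : (0:ℝ) ≤ D ^ (-s) := Real.rpow_nonneg hD.le _
    have : (0:ℝ) ≤ u x - u y := by linarith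
    positivity
  -- Lipschitz bound from the gradient bound
  have hlip : ∀ a b : EuclideanSpace ℝ (Fin n), |φ a - φ b| ≤ (10 / D) * dist a b := by
    intro a b
    have := Convex.norm_image_sub_le_of_norm_fderiv_le
      (f := φ) (C := 10 / D) (s := (Set.univ : Set (EuclideanSpace ℝ (Fin n))))
      (fun t _ => (hφsmooth.differentiable (by simp)).differentiableAt)
      (fun t _ => hφgrad t) convex_univ (mem_univ b) (mem_univ a)
    simpa [Real.norm_eq_abs, dist_eq_norm] using this
  -- Hölder bound for φ
  have hDpow : D ^ (-s) * D ^ s = 1 := by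
    rw [← Real.rpow_add hD]; simp
  have hφs : ∀ a b : EuclideanSpace ℝ (Fin n),
      |φ a - φ b| ≤ 10 * D ^ (-s) * dist a b ^ s := by
    intro a b
    by_cases hab : dist a b = 0
    · have : a = b := by rwa [dist_eq_zero] at hab
      simp [this, Real.zero_rpow hs.ne', hab]
    have hr : 0 < dist a b := lt_of_le_of_ne dist_nonneg (Ne.symm hab)
    by_cases hle : dist a b ≤ D
    · have hsplit : dist a b = dist a b ^ s * dist a b ^ (1 - s) := by
        rw [← Real.rpow_add hr]; norm_num
      have h1 : D ^ (1 - s) = D ^ (-s) * D := by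
        have h := Real.rpow_add hD (-s) 1
        rw [Real.rpow_one] at h
        rw [show (1:ℝ) - s = -s + 1 by ring, h]
      calc |φ a - φ b| ≤ (10 / D) * dist a b := hlip a b
        _ = (10 / D) * (dist a b ^ s * dist a b ^ (1 - s)) := by rw [← hsplit]
        _ ≤ (10 / D) * (dist a b ^ s * D ^ (1 - s)) :=
            mul_le_mul_of_nonneg_left
              (mul_le_mul_of_nonneg_left
                (Real.rpow_le_rpow hr.le hle (by linarith))
                (Real.rpow_nonneg dist_nonneg s))
              (by positivity)
        _ = 10 * D ^ (-s) * dist a b ^ s := by rw [h1]; field_simp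
    · push_neg at hle
      have h2 : D ^ s ≤ dist a b ^ s := Real.rpow_le_rpow hD.le hle.le hs.le
      have h3 : 10 * D ^ (-s) * D ^ s ≤ 10 * D ^ (-s) * dist a b ^ s := by
        have : (0:ℝ) ≤ 10 * D ^ (-s) := by positivity
        nlinarith
      have h4 : 10 * D ^ (-s) * D ^ s = 10 := by rw [mul_assoc, hDpow]; ring
      have h5 : |φ a - φ b| ≤ 1 := by
        rw [abs_sub_le_iff]
        exact ⟨by linarith [(hφ01 a).1, (hφ01 a).2, (hφ01 b).1, (hφ01 b).2],
          by linarith [(hφ01 a).1, (hφ01 a).2, (hφ01 b).1, (hφ01 b).2]⟩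
      linarith
  refine ⟨?_, ?_, E ∪ E₀, ?_, ?_⟩
  · intro z
    have h1 : 0 ≤ g z * φ z := mul_nonneg (hgpos z) (hφ01 z).1
    have h2 : (0:ℝ) ≤ Set.indicator (ball x D ∩ Ω) (fun _ => (1:ℝ)) z :=
      Set.indicator_nonneg (fun _ _ => zero_le_one) z
    exact add_nonneg h1 (mul_nonneg hc0 h2)
  · exact (hgmeas.mul hφsmooth.continuous.measurable).add
      (measurable_const.mul (measurable_const.indicator
        ((isOpen_ball.inter hΩopen).measurableSet)))
  · exact measure_union_null hE hE₀
  · intro z hz w hw hclose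
    have hzE : z ∈ Ω \ E := ⟨hz.1, fun h => hz.2 (Or.inl h)⟩
    have hwE : w ∈ Ω \ E := ⟨hw.1, fun h => hw.2 (Or.inl h)⟩
    have hzmono := hE₀prop z ⟨hz.1, fun h => hz.2 (Or.inr h)⟩
    have hwmono := hE₀prop w ⟨hw.1, fun h => hw.2 (Or.inr h)⟩
    have hu := hEprop z hzE w hwE hclose
    set I : EuclideanSpace ℝ (Fin n) → ℝ :=
      Set.indicator (ball x D ∩ Ω) (fun _ => (1:ℝ)) with hI_def
    have hInn : ∀ t, 0 ≤ I t := fun t => Set.indicator_nonneg (fun _ _ => zero_le_one) t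
    have hrs : (0:ℝ) ≤ dist z w ^ s := Real.rpow_nonneg dist_nonneg s
    -- second term bound
    have h2 : (u x - u y) * |φ z - φ w| ≤
        dist z w ^ s * (10 * D ^ (-s) * (u x - u y) * I z
          + 10 * D ^ (-s) * (u x - u y) * I w) := by
      by_cases heq : φ z = φ w
      · have hnn : (0:ℝ) ≤ dist z w ^ s * (10 * D ^ (-s) * (u x - u y) * I z
            + 10 * D ^ (-s) * (u x - u y) * I w) :=
          mul_nonneg hrs (add_nonneg (mul_nonneg hc0 (hInn z)) (mul_nonneg hc0 (hInn w)))
        rw [heq, sub_self, abs_zero, mul_zero]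
        exact hnn
      · -- one of φ z, φ w is nonzero
        have hone : I z = 1 ∨ I w = 1 := by
          by_cases hz0 : φ z = 0
          · have hw0 : φ w ≠ 0 := fun h => heq (by rw [hz0, h])
            have : w ∈ ball x D := by
              by_contra hmem; exact hw0 (hφ0 w hmem)
            exact Or.inr (Set.indicator_of_mem (Set.mem_inter this hw.1) _)
          · have : z ∈ ball x D := by
              by_contra hmem; exact hz0 (hφ0 z hmem)
            exact Or.inl (Set.indicator_of_mem (Set.mem_inter this hz.1) _)
        have hsum : (1:ℝ) ≤ I z + I w := by
          rcases hone with h | h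
          · linarith [hInn w]
          · linarith [hInn z]
        have huxy' : (0:ℝ) ≤ u x - u y := by linarith
        calc (u x - u y) * |φ z - φ w|
            ≤ (u x - u y) * (10 * D ^ (-s) * dist z w ^ s) :=
              mul_le_mul_of_nonneg_left (hφs z w) huxy'
          _ = dist z w ^ s * (10 * D ^ (-s) * (u x - u y) * 1) := by ring
          _ ≤ dist z w ^ s * (10 * D ^ (-s) * (u x - u y) * (I z + I w)) := by
              gcongr
          _ = dist z w ^ s * (10 * D ^ (-s) * (u x - u y) * I z
              + 10 * D ^ (-s) * (u x - u y) * I w) := by ring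
    -- first term bound
    have h1 : |v z - v w| ≤ dist z w ^ s * (g z * φ z + g w * φ w)
        + (u x - u y) * |φ z - φ w| := by
      rcases le_total (φ w) (φ z) with hφle | hφle
      · have key : v z - v w = (u z - u w) * φ w + (u z - u y) * (φ z - φ w) := by
          rw [hv, hv]; ring
        have e1 : |(u z - u w) * φ w| = |u z - u w| * φ w := by
          rw [abs_mul, abs_of_nonneg (hφ01 w).1]
        have e2 : |(u z - u y) * (φ z - φ w)| = (u z - u y) * |φ z - φ w| := by
          rw [abs_mul, abs_of_nonneg (by linarith [hzmono.1] : (0:ℝ) ≤ u z - u y)]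
        calc |v z - v w| ≤ |(u z - u w) * φ w| + |(u z - u y) * (φ z - φ w)| := by
              rw [key]; exact abs_add_le _ _
          _ = |u z - u w| * φ w + (u z - u y) * |φ z - φ w| := by rw [e1, e2]
          _ ≤ dist z w ^ s * (g z * φ z + g w * φ w)
              + (u x - u y) * |φ z - φ w| := by
            have b1 : |u z - u w| * φ w ≤ dist z w ^ s * (g z + g w) * φ w :=
              mul_le_mul_of_nonneg_right hu (hφ01 w).1
            have b2 : dist z w ^ s * (g z + g w) * φ w
                ≤ dist z w ^ s * (g z * φ z + g w * φ w) := by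
              have := mul_nonneg hrs (hgpos z)
              nlinarith [hgpos z, hgpos w]
            have b3 : (u z - u y) * |φ z - φ w| ≤ (u x - u y) * |φ z - φ w| :=
              mul_le_mul_of_nonneg_right (by linarith [hzmono.2]) (abs_nonneg _)
            linarith
      · have key : v z - v w = (u z - u w) * φ z + (u w - u y) * (φ z - φ w) := by
          rw [hv, hv]; ring
        have e1 : |(u z - u w) * φ z| = |u z - u w| * φ z := by
          rw [abs_mul, abs_of_nonneg (hφ01 z).1]
        have e2 : |(u w - u y) * (φ z - φ w)| = (u w - u y) * |φ z - φ w| := by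
          rw [abs_mul, abs_of_nonneg (by linarith [hwmono.1] : (0:ℝ) ≤ u w - u y)]
        calc |v z - v w| ≤ |(u z - u w) * φ z| + |(u w - u y) * (φ z - φ w)| := by
              rw [key]; exact abs_add_le _ _
          _ = |u z - u w| * φ z + (u w - u y) * |φ z - φ w| := by rw [e1, e2]
          _ ≤ dist z w ^ s * (g z * φ z + g w * φ w)
              + (u x - u y) * |φ z - φ w| := by
            have b1 : |u z - u w| * φ z ≤ dist z w ^ s * (g z + g w) * φ z :=
              mul_le_mul_of_nonneg_right hu (hφ01 z).1
            have b2 : dist z w ^ s * (g z + g w) * φ z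
                ≤ dist z w ^ s * (g z * φ z + g w * φ w) := by
              nlinarith [hgpos z, hgpos w, mul_nonneg hrs (hgpos w)]
            have b3 : (u w - u y) * |φ z - φ w| ≤ (u x - u y) * |φ z - φ w| :=
              mul_le_mul_of_nonneg_right (by linarith [hwmono.2]) (abs_nonneg _)
            linarith
    have hfin : dist z w ^ s * (g z * φ z + 10 * D ^ (-s) * (u x - u y) * I z
          + (g w * φ w + 10 * D ^ (-s) * (u x - u y) * I w))
        = dist z w ^ s * (g z * φ z + g w * φ w)
          + dist z w ^ s * (10 * D ^ (-s) * (u x - u y) * I z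
            + 10 * D ^ (-s) * (u x - u y) * I w) := by ring
    exact le_trans (by linarith [h1, h2]) (le_of_eq hfin.symm)
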